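/- With the optimal baseline b*_t(s,a) = q_{π,t}(s,a) and the corresponding optimal behavior policy μ* = μ^{*,b*}, for every time t and state s: Var( G^{b*}(τ^{μ*}_{t:T−1}) | S_t = s ) = ( Σ_a π_t(a|s)·√(u^{b*}_{π,t}(s,a)) )². In particular at t = T−1 this variance is 0, and u^{b*}_{π,t}(s,a) = ν_{π,t}(s,a) + Σ_{s'} p(s'|s,a)·Var( G^{b*}(τ^{μ*}_{t+1:T−1}) | S_{t+1}=s' ) for t ≤ T−2 with u^{b*}_{π,T−1} ≡ 0. -/

import Mathlib

open Finset

namespace DOpt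

variable {S A : Type}

/-- A time-indexed policy: for each time step and state, a probability distribution on actions. -/
def IsPolicy [Fintype A] (μ : ℕ → S → A → ℝ) : Prop :=
  ∀ t s, (∀ a, 0 ≤ μ t s a) ∧ ∑ a, μ t s a = 1

/-- A transition probability kernel on the finite state space. -/
def IsKernel [Fintype S] (p : S → A → S → ℝ) : Prop :=
  ∀ s a, (∀ s', 0 ≤ p s a s') ∧ ∑ s', p s a s' = 1

/-- Action value `q_{π,t}(s,a)` computed with `n` remaining transitions after time `t`
(`n = T - 1 - t` in a horizon-`T` MDP). -/
noncomputable def qval [Fintype S] [Fintype A] (p : S → A → S → ℝ) (π : ℕ → S → A → ℝ)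
    (r : S → A → ℝ) : ℕ → ℕ → S → A → ℝ
  | 0, _, s, a => r s a
  | n + 1, t, s, a =>
      r s a + ∑ s', p s a s' * ∑ a', π (t + 1) s' a' * qval p π r n (t + 1) s' a'

/-- `q_{π,t}(s,a)` in the horizon-`T` MDP. -/
noncomputable def qf [Fintype S] [Fintype A] (T : ℕ) (p : S → A → S → ℝ)
    (π : ℕ → S → A → ℝ) (r : S → A → ℝ) (t : ℕ) (s : S) (a : A) : ℝ :=
  qval p π r (T - 1 - t) t s a

/-- `v_{π,t}(s) = Σ_a π_t(a|s) q_{π,t}(s,a)`. -/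
noncomputable def vf [Fintype S] [Fintype A] (T : ℕ) (p : S → A → S → ℝ)
    (π : ℕ → S → A → ℝ) (r : S → A → ℝ) (t : ℕ) (s : S) : ℝ :=
  ∑ a, π t s a * qf T p π r t s a

/-- `ν_{π,t}(s,a) = Var_{s' ∼ p(·|s,a)}(v_{π,t+1}(s'))` for `t ≤ T-2`, and `0` at `t = T-1`. -/
noncomputable def nuf [Fintype S] [Fintype A] (T : ℕ) (p : S → A → S → ℝ)
    (π : ℕ → S → A → ℝ) (r : S → A → ℝ) (t : ℕ) (s : S) (a : A) : ℝ :=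
  if t + 2 ≤ T then
    (∑ s', p s a s' * (vf T p π r (t + 1) s') ^ 2) -
      (∑ s', p s a s' * vf T p π r (t + 1) s') ^ 2
  else 0

/-- Trajectories with `n` further transitions after the first action:
`(a_t, s_{t+1}, a_{t+1}, …, s_{t+n}, a_{t+n})`. -/
def Traj (S A : Type) : ℕ → Type
  | 0 => A
  | n + 1 => A × S × Traj S A n

/-- Expectation, over trajectories generated by the behavior policy `μ` starting at time `t`
in state `s` with `n` further transitions, of a function `f` of the trajectory. -/
noncomputable def Exp [Fintype S] [Fintype A] (p : S → A → S → ℝ) (μ : ℕ → S → A → ℝ) :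
    (n : ℕ) → ℕ → S → (Traj S A n → ℝ) → ℝ
  | 0, t, s, f => ∑ a, μ t s a * f a
  | n + 1, t, s, f =>
      ∑ a, μ t s a * ∑ s', p s a s' * Exp p μ n (t + 1) s' (fun τ => f (a, s', τ))

/-- Conditional variance of a function of the trajectory, given `S_t = s`. -/
noncomputable def Var [Fintype S] [Fintype A] (p : S → A → S → ℝ) (μ : ℕ → S → A → ℝ)
    (n : ℕ) (t : ℕ) (s : S) (f : Traj S A n → ℝ) : ℝ :=
  Exp p μ n t s (fun τ => (f τ) ^ 2) - (Exp p μ n t s f) ^ 2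

/-- `b̄_t(s) = Σ_a π_t(a|s) b_t(s,a)`. -/
noncomputable def bbar [Fintype A] (π : ℕ → S → A → ℝ) (b : ℕ → S → A → ℝ)
    (t : ℕ) (s : S) : ℝ :=
  ∑ a, π t s a * b t s a

/-- The per-decision importance-sampling estimator `G^b` with baseline `b`, target policy `π`
and behavior policy `μ`, as a function of the trajectory from time `t` (with `n` further
transitions, `n = T - 1 - t`). -/
noncomputable def Gest [Fintype S] [Fintype A] (π μ : ℕ → S → A → ℝ) (r : S → A → ℝ)
    (b : ℕ → S → A → ℝ) : (n : ℕ) → ℕ → S → Traj S A n → ℝ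
  | 0, t, s, a => (π t s a / μ t s a) * (r s a - b t s a) + bbar π b t s
  | n + 1, t, s, (a, s', τ) =>
      (π t s a / μ t s a) * (r s a + Gest π μ r b n (t + 1) s' τ - b t s a) + bbar π b t s

/-- Normalization of a weight vector into a probability distribution; the uniform distribution
when the total weight vanishes. -/
noncomputable def normPol [Fintype A] (w : A → ℝ) (a : A) : ℝ :=
  if (∑ a', w a') = 0 then ((Fintype.card A : ℝ))⁻¹ else w a / ∑ a', w a'

/-- `u_{π,t}(s,a)` (with baseline `b`), defined backwards in time together with the optimal
behavior policy `μ*`; the first argument is the number `n = T - 1 - t` of remaining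
transitions after time `t`. -/
noncomputable def uAux [Fintype S] [Fintype A] (T : ℕ) (p : S → A → S → ℝ)
    (π : ℕ → S → A → ℝ) (r : S → A → ℝ) (b : ℕ → S → A → ℝ) :
    ℕ → ℕ → S → A → ℝ
  | 0, t, s, a => (qf T p π r t s a - b t s a) ^ 2
  | n + 1, t, s, a =>
      (qf T p π r t s a - b t s a) ^ 2 + nuf T p π r t s a +
        ∑ s', p s a s' *
          Var p
            (fun t' s₁ a₁ => normPol (fun a₂ =>
              π t' s₁ a₂ * Real.sqrt (uAux T p π r b (n - (t' - (t + 1))) t' s₁ a₂)) a₁)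
            n (t + 1) s'
            (Gest π
              (fun t' s₁ a₁ => normPol (fun a₂ =>
                π t' s₁ a₂ * Real.sqrt (uAux T p π r b (n - (t' - (t + 1))) t' s₁ a₂)) a₁)
              r b n (t + 1) s')
  termination_by n => n
  decreasing_by all_goals omega

/-- `u_{π,t}(s,a)` in the horizon-`T` MDP, with baseline `b`. -/
noncomputable def uf [Fintype S] [Fintype A] (T : ℕ) (p : S → A → S → ℝ)
    (π : ℕ → S → A → ℝ) (r : S → A → ℝ) (b : ℕ → S → A → ℝ) (t : ℕ) (s : S) (a : A) : ℝ :=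
  uAux T p π r b (T - 1 - t) t s a

/-- The optimal behavior policy `μ*_t(a|s) ∝ π_t(a|s) √(u_{π,t}(s,a))` tailored to the
baseline `b` (uniform when all the weights vanish). -/
noncomputable def mustar [Fintype S] [Fintype A] (T : ℕ) (p : S → A → S → ℝ)
    (π : ℕ → S → A → ℝ) (r : S → A → ℝ) (b : ℕ → S → A → ℝ) (t : ℕ) (s : S) (a : A) : ℝ :=
  normPol (fun a' => π t s a' * Real.sqrt (uf T p π r b t s a')) a

/-- Conditional expectation `E[G^b(τ^μ_{t:T-1}) | S_t = s]`. -/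
noncomputable def ExpG [Fintype S] [Fintype A] (T : ℕ) (p : S → A → S → ℝ)
    (π μ : ℕ → S → A → ℝ) (r : S → A → ℝ) (b : ℕ → S → A → ℝ) (t : ℕ) (s : S) : ℝ :=
  Exp p μ (T - 1 - t) t s (Gest π μ r b (T - 1 - t) t s)

/-- Conditional variance `Var(G^b(τ^μ_{t:T-1}) | S_t = s)`. -/
noncomputable def VarG [Fintype S] [Fintype A] (T : ℕ) (p : S → A → S → ℝ)
    (π μ : ℕ → S → A → ℝ) (r : S → A → ℝ) (b : ℕ → S → A → ℝ) (t : ℕ) (s : S) : ℝ :=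
  Var p μ (T - 1 - t) t s (Gest π μ r b (T - 1 - t) t s)

/-- Membership in the enlarged policy-search space
`Λ = {μ : ∀ t,s,a, μ_t(a|s) = 0 → π_t(a|s)·u_{π,t}(s,a) = 0}`. -/
def inLambda [Fintype S] [Fintype A] (T : ℕ) (p : S → A → S → ℝ)
    (π : ℕ → S → A → ℝ) (r : S → A → ℝ) (b : ℕ → S → A → ℝ) (μ : ℕ → S → A → ℝ) : Prop :=
  ∀ t s a, t < T → μ t s a = 0 → π t s a * uf T p π r b t s a = 0


/-- The optimal baseline `b*_t(s,a) = q_{π,t}(s,a)`. -/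
noncomputable def bstar [Fintype S] [Fintype A] (T : ℕ) (p : S → A → S → ℝ)
    (π : ℕ → S → A → ℝ) (r : S → A → ℝ) : ℕ → S → A → ℝ :=
  fun t s a => qf T p π r t s a

/-- The zero baseline: with it, `Gest` is the plain PDIS estimator `G^{PDIS}`. -/
def zerob : ℕ → S → A → ℝ := fun _ _ _ => 0

/-!
With the baseline `q`, the reward and the baseline cancel: the centred estimator `G - v_t` equals
`ρ_t (G' - E_{s'} v_{t+1})`, where `G'` is the estimator from time `t + 1`. Hence `E G = v_t`, and
`Var G` splits into the spread `ν` of `v_{t+1}` under `p` and the variance still to come, both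
weighted by `μ ρ² = π² / μ`. The bracket is exactly `u^{b*}`, and the optimal `μ* ∝ π √u` turns
`Σ_a π² u / μ*` into `(Σ_a π √u)²`.
-/

section Expectation

variable [Fintype S] [Fintype A] {p : S → A → S → ℝ} {μ : ℕ → S → A → ℝ} {n t : ℕ} {s : S}

theorem Exp_add (f g : Traj S A n → ℝ) :
    Exp p μ n t s (fun τ => f τ + g τ) = Exp p μ n t s f + Exp p μ n t s g := by
  induction n generalizing t s with
  | zero => simp only [Exp, mul_add, sum_add_distrib]
  | succ n ih => simp only [Exp, ih, mul_add, sum_add_distrib]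

theorem Exp_const_mul (c : ℝ) (f : Traj S A n → ℝ) :
    Exp p μ n t s (fun τ => c * f τ) = c * Exp p μ n t s f := by
  induction n generalizing t s with
  | zero => simp only [Exp, mul_sum, mul_left_comm]
  | succ n ih => simp only [Exp, ih, mul_sum, mul_left_comm]

theorem Exp_const (hμ : IsPolicy μ) (hp : IsKernel p) (c : ℝ) :
    Exp p μ n t s (fun _ => c) = c := by
  induction n generalizing t s with
  | zero => rw [Exp, ← sum_mul, (hμ t s).2, one_mul]
  | succ n ih => simp only [Exp, ih, ← sum_mul, (hp _ _).2, (hμ t s).2, one_mul]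

theorem Exp_nonneg (hμ : IsPolicy μ) (hp : IsKernel p) {f : Traj S A n → ℝ}
    (hf : ∀ τ, 0 ≤ f τ) : 0 ≤ Exp p μ n t s f := by
  induction n generalizing t s with
  | zero => exact sum_nonneg fun a _ => mul_nonneg ((hμ t s).1 a) (hf a)
  | succ n ih =>
    exact sum_nonneg fun a _ => mul_nonneg ((hμ t s).1 a) <|
      sum_nonneg fun s' _ => mul_nonneg ((hp s a).1 s') (ih fun τ => hf _)

theorem Exp_sub_sq (hμ : IsPolicy μ) (hp : IsKernel p) (f : Traj S A n → ℝ) (c : ℝ) :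
    Exp p μ n t s (fun τ => (f τ - c) ^ 2) = Var p μ n t s f + (Exp p μ n t s f - c) ^ 2 := by
  have hexpand : (fun τ => (f τ - c) ^ 2) = fun τ => f τ ^ 2 + ((-2 * c) * f τ + c ^ 2) := by
    funext τ; ring
  rw [hexpand, Exp_add, Exp_add, Exp_const_mul, Exp_const hμ hp, Var]
  ring

theorem Exp_add_const (hμ : IsPolicy μ) (hp : IsKernel p) (f : Traj S A n → ℝ) (c : ℝ) :
    Exp p μ n t s (fun τ => f τ + c) = Exp p μ n t s f + c := by
  rw [Exp_add, Exp_const hμ hp]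

theorem Exp_sub_const (hμ : IsPolicy μ) (hp : IsKernel p) (f : Traj S A n → ℝ) (c : ℝ) :
    Exp p μ n t s (fun τ => f τ - c) = Exp p μ n t s f - c := by
  simp only [sub_eq_add_neg, Exp_add_const hμ hp]

theorem Var_nonneg (hμ : IsPolicy μ) (hp : IsKernel p) (f : Traj S A n → ℝ) :
    0 ≤ Var p μ n t s f := by
  have h := Exp_sub_sq hμ hp f (Exp p μ n t s f) (t := t) (s := s)
  rw [sub_self, sq, mul_zero, add_zero] at h
  exact h ▸ Exp_nonneg hμ hp fun τ => sq_nonneg _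

theorem Exp_congr_of_eqOn {μ' : ℕ → S → A → ℝ} (f : Traj S A n → ℝ)
    (h : ∀ k, t ≤ k → k ≤ t + n → μ k = μ' k) : Exp p μ n t s f = Exp p μ' n t s f := by
  induction n generalizing t s with
  | zero => simp only [Exp, h t le_rfl (by omega)]
  | succ n ih =>
    simp only [Exp, h t le_rfl (by omega)]
    congr! 4 with a _ s' _
    exact ih _ fun k hk₁ hk₂ => h k (by omega) (by omega)

end Expectation

theorem sum_mul_sub_sum {ι : Type} [Fintype ι] (w x : ι → ℝ) (hw : ∑ i, w i = 1) :
    ∑ i, w i * (x i - ∑ j, w j * x j) = 0 := by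
  simp only [mul_sub, sum_sub_distrib, ← sum_mul, hw, one_mul, sub_self]

theorem sum_mul_sub_sum_sq {ι : Type} [Fintype ι] (w x : ι → ℝ) (hw : ∑ i, w i = 1) :
    ∑ i, w i * (x i - ∑ j, w j * x j) ^ 2 = ∑ i, w i * x i ^ 2 - (∑ i, w i * x i) ^ 2 := by
  set m := ∑ j, w j * x j
  have hexpand : ∀ i, w i * (x i - m) ^ 2 = w i * x i ^ 2 - 2 * m * (w i * x i) + m ^ 2 * w i :=
    fun i => by ring
  simp only [hexpand, sum_add_distrib, sum_sub_distrib, ← mul_sum, hw]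
  ring

section Value

variable [Fintype S] [Fintype A] (T : ℕ) (p : S → A → S → ℝ) (π : ℕ → S → A → ℝ)
  (r : S → A → ℝ) {t : ℕ} (s : S) (a : A)

theorem qf_of_le (h : T ≤ t + 1) : qf T p π r t s a = r s a := by
  rw [qf, show T - 1 - t = 0 by omega, qval]

theorem qf_of_add_two_le (h : t + 2 ≤ T) :
    qf T p π r t s a = r s a + ∑ s', p s a s' * vf T p π r (t + 1) s' := by
  rw [qf, show T - 1 - t = T - 1 - (t + 1) + 1 by omega, qval]
  rfl

theorem nuf_eq_sum_mul_sub_sq (hp : IsKernel p) (h : t + 2 ≤ T) :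
    nuf T p π r t s a = ∑ s', p s a s' *
      (vf T p π r (t + 1) s' - ∑ s'', p s a s'' * vf T p π r (t + 1) s'') ^ 2 := by
  rw [nuf, if_pos h, sum_mul_sub_sum_sq _ _ (hp s a).2]

theorem nuf_nonneg (hp : IsKernel p) : 0 ≤ nuf T p π r t s a := by
  by_cases h : t + 2 ≤ T
  · rw [nuf_eq_sum_mul_sub_sq T p π r s a hp h]
    exact sum_nonneg fun s' _ => mul_nonneg ((hp s a).1 s') (sq_nonneg _)
  · rw [nuf, if_neg h]

end Value

section Baseline

variable [Fintype S] [Fintype A] {T : ℕ} {p : S → A → S → ℝ} {π μ : ℕ → S → A → ℝ}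
  {r : S → A → ℝ} {n t : ℕ} {s : S}

theorem Gest_bstar_zero (h : T ≤ t + 1) :
    Gest π μ r (bstar T p π r) 0 t s = fun _ => vf T p π r t s := by
  funext a
  change π t s a / μ t s a * (r s a - qf T p π r t s a) + vf T p π r t s = _
  rw [qf_of_le T p π r s a h, sub_self, mul_zero, zero_add]

theorem Gest_bstar_succ (h : t + 2 ≤ T) (a : A) (s' : S) (τ : Traj S A n) :
    Gest π μ r (bstar T p π r) (n + 1) t s (a, s', τ) =
      π t s a / μ t s a * (Gest π μ r (bstar T p π r) n (t + 1) s' τ -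
        ∑ s'', p s a s'' * vf T p π r (t + 1) s'') + vf T p π r t s := by
  change π t s a / μ t s a * (r s a + _ - qf T p π r t s a) + vf T p π r t s = _
  rw [qf_of_add_two_le T p π r s a h]
  ring

theorem Exp_Gest_bstar (hp : IsKernel p) (hμ : IsPolicy μ) (h : T - 1 - t = n) :
    Exp p μ n t s (Gest π μ r (bstar T p π r) n t s) = vf T p π r t s := by
  induction n generalizing t s with
  | zero => rw [Gest_bstar_zero (by omega), Exp_const hμ hp]
  | succ n ih =>
    have hinner : ∀ a s', Exp p μ n (t + 1) s'
        (fun τ => Gest π μ r (bstar T p π r) (n + 1) t s (a, s', τ)) =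
          π t s a / μ t s a * (vf T p π r (t + 1) s' -
            ∑ s'', p s a s'' * vf T p π r (t + 1) s'') + vf T p π r t s := by
      intro a s'
      simp only [Gest_bstar_succ (show t + 2 ≤ T by omega), Exp_add_const hμ hp,
        Exp_const_mul, Exp_sub_const hμ hp, ih (show T - 1 - (t + 1) = n by omega)]
    simp only [Exp, hinner, mul_add, sum_add_distrib, mul_left_comm (p s _ _), ← mul_sum,
      sum_mul_sub_sum _ _ (hp s _).2, ← sum_mul, (hp s _).2, (hμ t s).2, mul_zero, zero_add,
      one_mul]

theorem VarG_bstar_of_le (hp : IsKernel p) (hμ : IsPolicy μ) (h : T ≤ t + 1) :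
    VarG T p π μ r (bstar T p π r) t s = 0 := by
  rw [VarG, show T - 1 - t = 0 by omega, Var, Gest_bstar_zero h, Exp_const hμ hp,
    Exp_const hμ hp, sub_self]

theorem VarG_bstar_of_add_two_le (hp : IsKernel p) (hμ : IsPolicy μ) (h : t + 2 ≤ T) :
    VarG T p π μ r (bstar T p π r) t s = ∑ a, μ t s a * (π t s a / μ t s a) ^ 2 *
      (nuf T p π r t s a + ∑ s', p s a s' * VarG T p π μ r (bstar T p π r) (t + 1) s') := by
  obtain ⟨n, hn⟩ : ∃ n, T - 1 - t = n + 1 := ⟨T - 2 - t, by omega⟩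
  have hn' : T - 1 - (t + 1) = n := by omega
  have hcentre := Exp_sub_sq hμ hp (Gest π μ r (bstar T p π r) (n + 1) t s) (vf T p π r t s)
    (t := t) (s := s)
  rw [Exp_Gest_bstar hp hμ hn, sub_self, sq, mul_zero, add_zero] at hcentre
  unfold VarG
  rw [hn, hn', ← hcentre, Exp]
  refine sum_congr rfl fun a _ => ?_
  simp only [Gest_bstar_succ h, add_sub_cancel_right, mul_pow, Exp_const_mul, Exp_sub_sq hμ hp,
    Exp_Gest_bstar hp hμ hn']
  rw [nuf_eq_sum_mul_sub_sq T p π r s a hp h]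
  simp only [mul_left_comm (p s a _), ← mul_sum, mul_add, sum_add_distrib]
  ring

end Baseline

section OptimalPolicy

variable [Fintype S] [Fintype A]

theorem normPol_nonneg {w : A → ℝ} (hw : ∀ a, 0 ≤ w a) (a : A) : 0 ≤ normPol w a := by
  unfold normPol
  split_ifs
  · positivity
  · exact div_nonneg (hw a) (sum_nonneg fun a _ => hw a)

theorem sum_normPol [Nonempty A] (w : A → ℝ) : ∑ a, normPol w a = 1 := by
  unfold normPol
  split_ifs with h
  · rw [sum_const, card_univ, nsmul_eq_mul,
      mul_inv_cancel₀ (Nat.cast_ne_zero.2 Fintype.card_ne_zero)]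
  · rw [← sum_div, div_self h]

/-- Sampling proportionally to `π √u` attains the Cauchy–Schwarz lower bound `(Σ π √u)²` of the
second moment `Σ μ (π / μ)² u` over sampling distributions `μ`. -/
theorem sum_normPol_mul_div_sq_mul (w u : A → ℝ) (hw : ∀ a, 0 ≤ w a) (hu : ∀ a, 0 ≤ u a) :
    ∑ a, normPol (fun a' => w a' * Real.sqrt (u a')) a *
        (w a / normPol (fun a' => w a' * Real.sqrt (u a')) a) ^ 2 * u a =
      (∑ a, w a * Real.sqrt (u a)) ^ 2 := by
  set Z := ∑ a, w a * Real.sqrt (u a)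
  have hterm : ∀ a, normPol (fun a' => w a' * Real.sqrt (u a')) a *
      (w a / normPol (fun a' => w a' * Real.sqrt (u a')) a) ^ 2 * u a =
        w a * Real.sqrt (u a) * Z := by
    intro a
    by_cases hwa : w a * Real.sqrt (u a) = 0
    · rcases mul_eq_zero.1 hwa with h0 | h0
      · simp [h0]
      · simp [(Real.sqrt_eq_zero (hu a)).1 h0]
    have hpos : 0 < w a * Real.sqrt (u a) :=
      lt_of_le_of_ne (mul_nonneg (hw a) (Real.sqrt_nonneg _)) (Ne.symm hwa)
    have hZ : Z ≠ 0 := (lt_of_lt_of_le hpos <| single_le_sum (f := fun a => w a * Real.sqrt (u a))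
      (fun a _ => mul_nonneg (hw a) (Real.sqrt_nonneg _)) (mem_univ a)).ne'
    have hsqrt : Real.sqrt (u a) ≠ 0 := right_ne_zero_of_mul hwa
    rw [normPol, if_neg hZ]
    field_simp
    rw [Real.sq_sqrt (hu a)]
    ring
  rw [sum_congr rfl fun a _ => hterm a, ← sum_mul, sq]

theorem isPolicy_mustar [Nonempty A] (T : ℕ) (p : S → A → S → ℝ) {π : ℕ → S → A → ℝ}
    (hπ : ∀ t s a, 0 ≤ π t s a) (r : S → A → ℝ) (b : ℕ → S → A → ℝ) :
    IsPolicy (mustar T p π r b) := fun t s =>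
  ⟨normPol_nonneg fun a => mul_nonneg (hπ t s a) (Real.sqrt_nonneg _), sum_normPol _⟩

theorem Gest_congr_of_eqOn {π μ μ' : ℕ → S → A → ℝ} {r : S → A → ℝ} {b : ℕ → S → A → ℝ}
    {n t : ℕ} {s : S} (h : ∀ k, t ≤ k → k ≤ t + n → μ k = μ' k) :
    Gest π μ r b n t s = Gest π μ' r b n t s := by
  induction n generalizing t s with
  | zero => funext a; simp only [Gest, h t le_rfl (by omega)]
  | succ n ih =>
    funext ⟨a, s', τ⟩
    simp only [Gest, h t le_rfl (by omega),
      ih (t := t + 1) (s := s') fun k hk₁ hk₂ => h k (by omega) (by omega)]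

theorem Var_Gest_congr_of_eqOn {p : S → A → S → ℝ} {π μ μ' : ℕ → S → A → ℝ} {r : S → A → ℝ}
    {b : ℕ → S → A → ℝ} {n t : ℕ} {s : S} (h : ∀ k, t ≤ k → k ≤ t + n → μ k = μ' k) :
    Var p μ n t s (Gest π μ r b n t s) = Var p μ' n t s (Gest π μ' r b n t s) := by
  rw [Var, Var, Gest_congr_of_eqOn h, Exp_congr_of_eqOn _ h, Exp_congr_of_eqOn _ h]

variable {T : ℕ} {p : S → A → S → ℝ} {π : ℕ → S → A → ℝ} {r : S → A → ℝ}
  {b : ℕ → S → A → ℝ} {t : ℕ} {s : S} {a : A}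

theorem uf_of_le (h : T ≤ t + 1) : uf T p π r b t s a = (qf T p π r t s a - b t s a) ^ 2 := by
  rw [uf, show T - 1 - t = 0 by omega, uAux]

theorem uf_of_add_two_le (h : t + 2 ≤ T) :
    uf T p π r b t s a = (qf T p π r t s a - b t s a) ^ 2 + nuf T p π r t s a +
      ∑ s', p s a s' * VarG T p π (mustar T p π r b) r b (t + 1) s' := by
  obtain ⟨n, hn⟩ : ∃ n, T - 1 - t = n + 1 := ⟨T - 2 - t, by omega⟩
  rw [uf, hn, uAux]
  congr! 3 with s'
  rw [VarG, show T - 1 - (t + 1) = n by omega]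
  -- the policy inside `uAux` is `mustar`, indexed there by the number of remaining steps
  refine Var_Gest_congr_of_eqOn fun k hk₁ hk₂ => ?_
  funext s₁ a₁
  simp only [mustar, uf, show T - 1 - k = n - (k - (t + 1)) by omega]

end OptimalPolicy

theorem doubly_optimal_variance_general {S A : Type} [Fintype S] [Fintype A] [Nonempty A]
    (T : ℕ)
    (p : S → A → S → ℝ) (hp : IsKernel p)
    (r : S → A → ℝ)
    (π : ℕ → S → A → ℝ) (hπ : IsPolicy π) :
    (∀ (t : ℕ) (s : S), t < T →
      VarG T p π (mustar T p π r (bstar T p π r)) r (bstar T p π r) t s =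
        (∑ a, π t s a * Real.sqrt (uf T p π r (bstar T p π r) t s a)) ^ 2) ∧
    (∀ s : S,
      VarG T p π (mustar T p π r (bstar T p π r)) r (bstar T p π r) (T - 1) s = 0) ∧
    (∀ (s : S) (a : A), uf T p π r (bstar T p π r) (T - 1) s a = 0) ∧
    (∀ (t : ℕ), t + 2 ≤ T → ∀ (s : S) (a : A),
      uf T p π r (bstar T p π r) t s a =
        nuf T p π r t s a +
          ∑ s', p s a s' *
            VarG T p π (mustar T p π r (bstar T p π r)) r (bstar T p π r) (t + 1) s') := by
  have hμ : IsPolicy (mustar T p π r (bstar T p π r)) :=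
    isPolicy_mustar T p (fun t s a => (hπ t s).1 a) r _
  have hu_last : ∀ t, T ≤ t + 1 → ∀ s a, uf T p π r (bstar T p π r) t s a = 0 :=
    fun t h s a => by simp [uf_of_le h, bstar]
  have hu_step : ∀ t, t + 2 ≤ T → ∀ s a, uf T p π r (bstar T p π r) t s a =
      nuf T p π r t s a + ∑ s', p s a s' *
        VarG T p π (mustar T p π r (bstar T p π r)) r (bstar T p π r) (t + 1) s' :=
    fun t h s a => by simp [uf_of_add_two_le h, bstar]
  refine ⟨fun t s _ => ?_, fun s => VarG_bstar_of_le hp hμ le_tsub_add, hu_last _ le_tsub_add,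
    hu_step⟩
  rcases le_or_gt T (t + 1) with hlast | hstep
  · simp [VarG_bstar_of_le hp hμ hlast, hu_last t hlast]
  have hu_nonneg : ∀ a, 0 ≤ uf T p π r (bstar T p π r) t s a := fun a => by
    rw [hu_step t hstep s a]
    exact add_nonneg (nuf_nonneg T p π r s a hp) <|
      sum_nonneg fun s' _ => mul_nonneg ((hp s a).1 s') (Var_nonneg hμ hp _)
  rw [VarG_bstar_of_add_two_le hp hμ hstep, ← sum_normPol_mul_div_sq_mul _ _ (hπ t s).1 hu_nonneg]
  simp only [← hu_step t hstep s]
  rfl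

/-- with the optimal baseline `b*_t(s,a) = q_{π,t}(s,a)` and the corresponding
optimal behavior policy `μ* = μ^{*,b*}`, for every time `t` and state `s`,
`Var(G^{b*}(τ^{μ*}_{t:T−1})|S_t=s) = (Σ_a π_t(a|s)√(u^{b*}_{π,t}(s,a)))²`; in particular this
variance vanishes at `t = T−1`, and `u^{b*}_{π,T−1} ≡ 0` while
`u^{b*}_{π,t}(s,a) = ν_{π,t}(s,a) + Σ_{s'} p(s'|s,a)·Var(G^{b*}(τ^{μ*}_{t+1:T−1})|S_{t+1}=s')`
for `t ≤ T−2`. -/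
theorem doubly_optimal_variance {S A : Type} [Fintype S] [Fintype A] [Nonempty A]
    (T : ℕ) (hT : 1 ≤ T)
    (p : S → A → S → ℝ) (hp : IsKernel p)
    (r : S → A → ℝ)
    (π : ℕ → S → A → ℝ) (hπ : IsPolicy π) :
    (∀ (t : ℕ) (s : S), t < T →
      VarG T p π (mustar T p π r (bstar T p π r)) r (bstar T p π r) t s =
        (∑ a, π t s a * Real.sqrt (uf T p π r (bstar T p π r) t s a)) ^ 2) ∧
    (∀ s : S,
      VarG T p π (mustar T p π r (bstar T p π r)) r (bstar T p π r) (T - 1) s = 0) ∧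
    (∀ (s : S) (a : A), uf T p π r (bstar T p π r) (T - 1) s a = 0) ∧
    (∀ (t : ℕ), t + 2 ≤ T → ∀ (s : S) (a : A),
      uf T p π r (bstar T p π r) t s a =
        nuf T p π r t s a +
          ∑ s', p s a s' *
            VarG T p π (mustar T p π r (bstar T p π r)) r (bstar T p π r) (t + 1) s') :=
  doubly_optimal_variance_general T p hp r π hπ

end DOpt
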